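/- For any digraph D on m vertices (m ≥ 1), there exists a digraph G containing D as an induced subdigraph with metric dimension β(G) ≤ ⌈log₂ m⌉. Concretely, G is obtained from D by adding k = ⌈log₂ m⌉ new vertices v₁,…,v_k, where the vertices of D are labeled by distinct binary strings of length k, and v_i has an arc to exactly those vertices of D whose label has a 0 in coordinate i; then the set {v₁,…,v_k} resolves G. -/

import Mathlib

/-- A directed walk of length `n` from `u` to `v` along the arc relation `A`. -/
def IsDWalk {V : Type*} (A : V → V → Prop) {n : ℕ} (f : Fin (n + 1) → V) (u v : V) : Prop :=
  f 0 = u ∧ f (Fin.last n) = v ∧ ∀ i : Fin n, A (f i.castSucc) (f i.succ)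

/-- Directed distance: the length of a shortest directed path from `u` to `v`,
`⊤` (infinity) if there is no directed path. -/
noncomputable def ddist {V : Type*} (A : V → V → Prop) (u v : V) : ℕ∞ :=
  sInf {m : ℕ∞ | ∃ (n : ℕ) (f : Fin (n + 1) → V), IsDWalk A f u v ∧ m = (n : ℕ∞)}

/-!
A vertex `u` of `D` is at distance `1` from `vᵢ` exactly when its label has a `0` in
coordinate `i` (otherwise it is at distance `≥ 2`, as `u ≠ vᵢ`), so the distances from
`v₁, …, v_k` recover the label of `u`, hence `u`. A new vertex `vⱼ` is recognised by its
distance `0` from itself.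
-/

def Resolves {V ι : Type*} (A : V → V → Prop) (s : ι → V) : Prop :=
  ∀ x y : V, (∀ i, ddist A (s i) x = ddist A (s i) y) → x = y

section DirectedDistance

variable {V : Type*} {A : V → V → Prop} {u v : V}

theorem ddist_self (u : V) : ddist A u u = 0 :=
  nonpos_iff_eq_zero.mp <| sInf_le ⟨0, fun _ => u, ⟨rfl, rfl, fun i => i.elim0⟩, rfl⟩

theorem exists_dWalk_of_ddist_lt {m : ℕ∞} (h : ddist A u v < m) :
    ∃ (n : ℕ) (f : Fin (n + 1) → V), IsDWalk A f u v ∧ (n : ℕ∞) < m := by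
  obtain ⟨_, ⟨n, f, hf, rfl⟩, hn⟩ := sInf_lt_iff.mp h
  exact ⟨n, f, hf, hn⟩

theorem ddist_eq_zero_iff : ddist A u v = 0 ↔ u = v := by
  refine ⟨fun h => ?_, fun h => h ▸ ddist_self u⟩
  obtain ⟨n, f, ⟨rfl, rfl, -⟩, hn⟩ := exists_dWalk_of_ddist_lt (h ▸ zero_lt_one : ddist A u v < 1)
  obtain rfl : n = 0 := by exact_mod_cast Order.lt_one_iff.mp hn
  rfl

theorem ddist_eq_one_iff (huv : u ≠ v) : ddist A u v = 1 ↔ A u v := by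
  constructor
  · intro h
    obtain ⟨n, f, ⟨rfl, rfl, hf⟩, hn⟩ :=
      exists_dWalk_of_ddist_lt (h ▸ (by norm_num) : ddist A u v < 2)
    have hn : n < 2 := by exact_mod_cast hn
    interval_cases n
    · exact absurd rfl huv
    · exact hf 0
  · intro h
    refine le_antisymm (sInf_le ⟨1, ![u, v], ⟨rfl, rfl, fun i => ?_⟩, rfl⟩) ?_
    · fin_cases i
      exact h
    · exact Order.one_le_iff_ne_zero.mpr (mt ddist_eq_zero_iff.mp huv)

end DirectedDistance

theorem resolves_inr_of_injective_label {V ι : Type*} {A : V ⊕ ι → V ⊕ ι → Prop}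
    (label : V → ι → Bool) (hlabel : Function.Injective label)
    (hA : ∀ i v, A (.inr i) (.inl v) ↔ label v i = false) : Resolves A Sum.inr := by
  have eq_source : ∀ i y, ddist A (.inr i) (.inr i) = ddist A (.inr i) y → .inr i = y :=
    fun i y h => ddist_eq_zero_iff.mp ((ddist_self _).symm.trans h).symm
  have label_eq_false_iff : ∀ i v, label v i = false ↔ ddist A (.inr i) (.inl v) = 1 :=
    fun i v => (hA i v).symm.trans (ddist_eq_one_iff Sum.inr_ne_inl).symm
  rintro (u | i) y h
  · rcases y with v | j
    · have same_zeros : ∀ i, label u i = false ↔ label v i = false := fun i => by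
        rw [label_eq_false_iff, label_eq_false_iff, h i]
      refine congrArg Sum.inl (hlabel (funext fun i => Bool.eq_iff_iff.mpr ?_))
      simpa using not_congr (same_zeros i)
    · exact (eq_source j _ (h j).symm).symm
  · exact eq_source i y (h i)

theorem embed_with_log_metric_dim {V : Type*} (D : V → V → Prop)
    (k : ℕ)
    (label : V → Fin k → Bool) (hlabel : Function.Injective label) :
    ∀ x y : V ⊕ Fin k,
      (∀ i : Fin k,
        ddist (fun a b : V ⊕ Fin k =>
          match a, b with
          | Sum.inl u, Sum.inl v => D u v
          | Sum.inr i, Sum.inl v => label v i = false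
          | _, _ => False) (Sum.inr i) x =
        ddist (fun a b : V ⊕ Fin k =>
          match a, b with
          | Sum.inl u, Sum.inl v => D u v
          | Sum.inr i, Sum.inl v => label v i = false
          | _, _ => False) (Sum.inr i) y) → x = y :=
  resolves_inr_of_injective_label label hlabel fun _ _ => Iff.rfl
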